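/- Let f(x,y) = arcsinh(e^y · cos x). Then the region D = {(x,y) ∈ ℝ² : f_x(x,y)² + f_y(x,y)² < 1} equals {(x,y) : e^{2y}(1 − cos 2x) < 2}, and D is path-connected. -/

import Mathlib

noncomputable def scherkF : ℝ → ℝ → ℝ := fun x y => Real.arsinh (Real.exp y * Real.cos x)

noncomputable def scherkFx : ℝ → ℝ → ℝ := fun x y => deriv (fun x' => scherkF x' y) x
noncomputable def scherkFy : ℝ → ℝ → ℝ := fun x y => deriv (fun y' => scherkF x y') y

/-!
Since `arsinh' t = 1 / √(1 + t²)`, the squared gradient of `f` is `e^{2y} / (1 + e^{2y} cos² x)`,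
which is `< 1` exactly when `e^{2y} sin² x < 1`. This region is closed under lowering `y` and
contains the whole line `y = -1`, so every point of it is joined to `(0, -1)` by a vertical and
a horizontal segment.
-/

open Real

section DownwardClosed

variable {S : Set (ℝ × ℝ)}

theorem segment_mk_subset_of_downward_closed
    (hdown : ∀ ⦃x y y'⦄, y' ≤ y → (x, y) ∈ S → (x, y') ∈ S) {x a b : ℝ}
    (ha : (x, a) ∈ S) (hb : (x, b) ∈ S) :
    segment ℝ (x, a) (x, b) ⊆ S := by
  rw [← Prod.image_mk_segment_right, segment_eq_uIcc]
  rintro _ ⟨t, ht, rfl⟩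
  rcases le_total a b with hab | hab
  · exact hdown (ht.2.trans (max_eq_right hab).le) hb
  · exact hdown (ht.2.trans (max_eq_left hab).le) ha

theorem isPathConnected_of_downward_closed
    (hdown : ∀ ⦃x y y'⦄, y' ≤ y → (x, y) ∈ S → (x, y') ∈ S) {m : ℝ} (hline : ∀ x, (x, m) ∈ S) :
    IsPathConnected S := by
  refine ⟨(0, m), hline 0, fun p hp => ?_⟩
  have horizontal : segment ℝ ((0 : ℝ), m) (p.1, m) ⊆ S := by
    rw [← Prod.image_mk_segment_left]
    rintro _ ⟨x, -, rfl⟩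
    exact hline x
  exact (JoinedIn.of_segment_subset horizontal).trans
    (.of_segment_subset (segment_mk_subset_of_downward_closed hdown (hline p.1) hp))

end DownwardClosed

theorem scherkFx_eq (x y : ℝ) :
    scherkFx x y = -(exp y * sin x) / √(1 + (exp y * cos x) ^ 2) := by
  unfold scherkFx scherkF
  rw [((hasDerivAt_cos x).const_mul (exp y)).arsinh.deriv]
  ring

theorem scherkFy_eq (x y : ℝ) :
    scherkFy x y = exp y * cos x / √(1 + (exp y * cos x) ^ 2) := by
  unfold scherkFy scherkF
  rw [((hasDerivAt_exp y).mul_const (cos x)).arsinh.deriv, smul_eq_mul, div_eq_inv_mul]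

theorem scherkFx_sq_add_scherkFy_sq (x y : ℝ) :
    scherkFx x y ^ 2 + scherkFy x y ^ 2 = exp (2 * y) / (1 + exp (2 * y) * cos x ^ 2) := by
  have hpos : 0 < 1 + (exp y * cos x) ^ 2 := by positivity
  rw [scherkFx_eq, scherkFy_eq, div_pow, div_pow, sq_sqrt hpos.le, ← add_div, mul_comm 2 y,
    exp_mul, rpow_two]
  congr 1
  · linear_combination exp y ^ 2 * sin_sq_add_cos_sq x
  · ring

theorem scherkFx_sq_add_scherkFy_sq_lt_one_iff (x y : ℝ) :
    scherkFx x y ^ 2 + scherkFy x y ^ 2 < 1 ↔ exp (2 * y) * (1 - cos (2 * x)) < 2 := by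
  rw [scherkFx_sq_add_scherkFy_sq, div_lt_one (by positivity), cos_two_mul]
  constructor <;> intro h <;> linarith

theorem scherk_spacelike_region :
    {p : ℝ × ℝ | scherkFx p.1 p.2 ^ 2 + scherkFy p.1 p.2 ^ 2 < 1}
      = {p : ℝ × ℝ | Real.exp (2 * p.2) * (1 - Real.cos (2 * p.1)) < 2} ∧
    IsPathConnected {p : ℝ × ℝ | scherkFx p.1 p.2 ^ 2 + scherkFy p.1 p.2 ^ 2 < 1} := by
  have hD : {p : ℝ × ℝ | scherkFx p.1 p.2 ^ 2 + scherkFy p.1 p.2 ^ 2 < 1}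
      = {p : ℝ × ℝ | exp (2 * p.2) * (1 - cos (2 * p.1)) < 2} :=
    Set.ext fun p => scherkFx_sq_add_scherkFy_sq_lt_one_iff p.1 p.2
  refine ⟨hD, hD ▸ isPathConnected_of_downward_closed (m := -1) ?_ ?_⟩
  · intro x y y' hy h
    have hcos : 0 ≤ 1 - cos (2 * x) := by linarith [cos_le_one (2 * x)]
    calc exp (2 * y') * (1 - cos (2 * x)) ≤ exp (2 * y) * (1 - cos (2 * x)) := by gcongr
      _ < 2 := h
  · intro x
    have hcos : 1 - cos (2 * x) ≤ 2 := by linarith [neg_one_le_cos (2 * x)]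
    calc exp (2 * -1) * (1 - cos (2 * x)) ≤ exp (2 * -1) * 2 := by gcongr
      _ < 1 * 2 := by gcongr; exact exp_lt_one_iff.2 (by norm_num)
      _ = 2 := one_mul 2
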